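/- Let Ω be a witness and let τ be an unambiguous and causal trace. Then for every location 1 ≤ i ≤ m and all r,s,t ∈ L(τ,i): if ⟨r,s⟩ ∈ Ω^e(τ,i), then ⟨r,t⟩ ∈ Ω^e(τ,i) or ⟨t,s⟩ ∈ Ω^e(τ,i). -/
import Mathlib


/-- A memory operation: read or write. -/
inductive MemOp : Type
  | R : MemOp
  | W : MemOp
deriving DecidableEq

/-- A memory event ⟨op, proc, loc, data⟩. -/
structure MemEvent : Type where
  op : MemOp
  proc : ℕ
  loc : ℕ
  data : ℕ
deriving DecidableEq

instance : Inhabited MemEvent := ⟨⟨MemOp.R, 1, 1, 0⟩⟩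

/-- A trace is a finite sequence of memory events (1-indexed via `ev`). -/
abbrev MTrace := List MemEvent

/-- The x-th event of a trace (1-indexed). -/
def ev (τ : MTrace) (x : ℕ) : MemEvent := τ.getD (x - 1) default

/-- dom(τ) = {1, …, |τ|}. -/
def Dom (τ : MTrace) : Set ℕ := {x | 1 ≤ x ∧ x ≤ τ.length}

/-- P(τ,i): indices of events of processor i. -/
def Pset (τ : MTrace) (i : ℕ) : Set ℕ := {x | x ∈ Dom τ ∧ (ev τ x).proc = i}

/-- L(τ,j): indices of events to location j. -/
def Lset (τ : MTrace) (j : ℕ) : Set ℕ := {x | x ∈ Dom τ ∧ (ev τ x).loc = j}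

/-- L^w(τ,j): indices of write events to location j. -/
def Lw (τ : MTrace) (j : ℕ) : Set ℕ := {x | x ∈ Lset τ j ∧ (ev τ x).op = MemOp.W}

/-- L^r(τ,j): indices of read events to location j. -/
def Lr (τ : MTrace) (j : ℕ) : Set ℕ := {x | x ∈ Lset τ j ∧ (ev τ x).op = MemOp.R}

/-- A trace is unambiguous if every write event has a nonzero data value distinct
from that of every other write event to the same location. -/
def Unambiguous (τ : MTrace) : Prop :=
  ∀ j, ∀ x ∈ Lw τ j, (ev τ x).data ≠ 0 ∧
    ∀ y ∈ Lw τ j, y ≠ x → (ev τ y).data ≠ (ev τ x).data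

/-- A trace is causal if the data value of every read event is 0 or equals the data
value of some write event to the same location. -/
def Causal (τ : MTrace) : Prop :=
  ∀ j, ∀ x ∈ Lr τ j, (ev τ x).data = 0 ∨ ∃ y ∈ Lw τ j, (ev τ y).data = (ev τ x).data

/-- ⟨x,y⟩ ∈ M(τ,i): the total order on P(τ,i) given by index order. -/
def Mrel (τ : MTrace) (i : ℕ) (x y : ℕ) : Prop :=
  x ∈ Pset τ i ∧ y ∈ Pset τ i ∧ x < y

/-- A sequence of memory events (given by its length and 1-indexed access function)
is serial: each event's data value equals that of the latest write to the same
location at an index no larger than its own, and equals 0 if no such write exists. -/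
def SerialFn (len : ℕ) (e : ℕ → MemEvent) : Prop :=
  ∀ u, 1 ≤ u → u ≤ len →
    ((∀ k, 1 ≤ k → k ≤ u → ¬((e k).op = MemOp.W ∧ (e k).loc = (e u).loc)) →
       (e u).data = 0) ∧
    (∀ k, 1 ≤ k → k ≤ u → (e k).op = MemOp.W → (e k).loc = (e u).loc →
       (∀ k', k < k' → k' ≤ u → ¬((e k').op = MemOp.W ∧ (e k').loc = (e u).loc)) →
       (e u).data = (e k).data)

/-- f (with inverse g) is a permutation of {1,…,|τ|} satisfying conditions C1 and C2. -/
def IsSCWitness (τ : MTrace) (f g : ℕ → ℕ) : Prop :=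
  (∀ u ∈ Dom τ, f u ∈ Dom τ) ∧
  (∀ u ∈ Dom τ, g u ∈ Dom τ) ∧
  (∀ u ∈ Dom τ, g (f u) = u) ∧
  (∀ u ∈ Dom τ, f (g u) = u) ∧
  (∀ i u v, Mrel τ i u v → f u < f v) ∧
  SerialFn τ.length (fun x => ev τ (g x))

/-- A trace is sequentially consistent if some permutation satisfies C1 and C2. -/
def SeqConsistent (τ : MTrace) : Prop := ∃ f g, IsSCWitness τ f g

/-- A witness assigns to each trace and location a strict total order on L^w(τ,j). -/
def IsWitness (Ω : MTrace → ℕ → ℕ → ℕ → Prop) : Prop :=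
  ∀ τ j,
    (∀ x y, Ω τ j x y → x ∈ Lw τ j ∧ y ∈ Lw τ j) ∧
    (∀ x, ¬ Ω τ j x x) ∧
    (∀ x y z, Ω τ j x y → Ω τ j y z → Ω τ j x z) ∧
    (∀ x y, x ∈ Lw τ j → y ∈ Lw τ j → x ≠ y → Ω τ j x y ∨ Ω τ j y x)

/-- A witness is simple if it orders the writes to each location by index order. -/
def IsSimple (Ω : MTrace → ℕ → ℕ → ℕ → Prop) : Prop :=
  ∀ τ j x y, Ω τ j x y ↔ (x ∈ Lw τ j ∧ y ∈ Lw τ j ∧ x < y)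

/-- ⟨x,y⟩ ∈ Ω^e(τ,j): the extension of the witness order to all events to location j. -/
def OmegaE (Ω : MTrace → ℕ → ℕ → ℕ → Prop) (τ : MTrace) (j x y : ℕ) : Prop :=
  x ∈ Lset τ j ∧ y ∈ Lset τ j ∧
  (((ev τ x).data = (ev τ y).data ∧ (ev τ x).op = MemOp.W ∧ (ev τ y).op = MemOp.R) ∨
   ((ev τ x).data = 0 ∧ (ev τ y).data ≠ 0) ∨
   (∃ a b, a ∈ Lw τ j ∧ b ∈ Lw τ j ∧ Ω τ j a b ∧
      (ev τ a).data = (ev τ x).data ∧ (ev τ b).data = (ev τ y).data))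

/-- Edge of the constraint graph G(Ω)(τ): union of the M(τ,i) and the Ω^e(τ,j). -/
def GEdge (Ω : MTrace → ℕ → ℕ → ℕ → Prop) (τ : MTrace) (x y : ℕ) : Prop :=
  (∃ i, Mrel τ i x y) ∨ (∃ j, OmegaE Ω τ j x y)

/-- The constraint graph G(Ω)(τ) has a cycle. -/
def HasCycle (Ω : MTrace → ℕ → ℕ → ℕ → Prop) (τ : MTrace) : Prop :=
  ∃ x, Relation.TransGen (GEdge Ω τ) x x

/-- The constraint graph G(Ω)(τ) is acyclic. -/
def Acyclic (Ω : MTrace → ℕ → ℕ → ℕ → Prop) (τ : MTrace) : Prop :=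
  ¬ HasCycle Ω τ

/-- All events of the trace have processor in {1,…,n} and location in {1,…,m}. -/
def InRange (n m : ℕ) (τ : MTrace) : Prop :=
  ∀ e ∈ τ, 1 ≤ e.proc ∧ e.proc ≤ n ∧ 1 ≤ e.loc ∧ e.loc ≤ m

/-- All data values in the trace lie in {0,…,v}. -/
def DataBounded (v : ℕ) (τ : MTrace) : Prop := ∀ e ∈ τ, e.data ≤ v

/-- A memory system with n processors and m locations: for each v ≥ 1, a set S(n,m,v)
of traces whose processors, locations, and data values are in range. -/
structure MemSystem (n m : ℕ) : Type where
  S : ℕ → Set MTrace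
  wf : ∀ v, 1 ≤ v → ∀ τ ∈ S v, InRange n m τ ∧ DataBounded v τ

/-- S(n,m): the union of the S(n,m,v) over v ≥ 1. -/
def MemSystem.traces {n m : ℕ} (M : MemSystem n m) : Set MTrace :=
  {τ | ∃ v, 1 ≤ v ∧ τ ∈ M.S v}

/-- A renaming function λ with λ(j,0) = 0 for every location j. -/
def IsRenaming (lam : ℕ → ℕ → ℕ) : Prop := ∀ j, lam j 0 = 0

/-- λ^d: rename the data value of each event according to its location. -/
def renameD (lam : ℕ → ℕ → ℕ) (τ : MTrace) : MTrace :=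
  τ.map fun e => { e with data := lam e.loc e.data }

/-- The memory system is data independent: a trace is in S(n,m,v) iff it is obtained
from an unambiguous trace of S(n,m) by a renaming function with values in {0,…,v}. -/
def DataIndependent {n m : ℕ} (M : MemSystem n m) : Prop :=
  ∀ v, 1 ≤ v → ∀ τ, τ ∈ M.S v ↔
    ∃ τ' lam, τ' ∈ M.traces ∧ Unambiguous τ' ∧ IsRenaming lam ∧
      (∀ j d, lam j d ≤ v) ∧ τ = renameD lam τ'

/-- λ^p: rename the processor of each event. -/
def renameP (lam : ℕ → ℕ) (τ : MTrace) : MTrace :=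
  τ.map fun e => { e with proc := lam e.proc }

/-- λ^l: rename the location of each event. -/
def renameL (lam : ℕ → ℕ) (τ : MTrace) : MTrace :=
  τ.map fun e => { e with loc := lam e.loc }

/-- λ is a permutation of {1,…,n}. -/
def PermOn (n : ℕ) (lam : ℕ → ℕ) : Prop :=
  Set.BijOn lam (Set.Icc 1 n) (Set.Icc 1 n)

/-- The memory system is processor symmetric. -/
def ProcSymmetric {n m : ℕ} (M : MemSystem n m) : Prop :=
  ∀ lam, PermOn n lam → ∀ v τ, τ ∈ M.S v → renameP lam τ ∈ M.S v

/-- The memory system is location symmetric. -/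
def LocSymmetric {n m : ℕ} (M : MemSystem n m) : Prop :=
  ∀ lam, PermOn m lam → ∀ v τ, τ ∈ M.S v → renameL lam τ ∈ M.S v

/-- x ⊕ 1 in the cyclic group {1,…,k} with identity k. -/
def cyc (k x : ℕ) : ℕ := if x = k then 1 else x + 1

/-- A k-nice cycle u_1,v_1,…,u_k,v_k in G(Ω)(τ): distinct vertices; each ⟨u_x,v_x⟩
is a processor edge, each ⟨v_x,u_{x⊕1}⟩ a location edge; no processor (resp.
location) contributes two edges. -/
def NiceCycle (Ω : MTrace → ℕ → ℕ → ℕ → Prop) (τ : MTrace) (k : ℕ)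
    (u v : ℕ → ℕ) : Prop :=
  1 ≤ k ∧
  (∀ x ∈ Set.Icc 1 k, ∀ y ∈ Set.Icc 1 k, x ≠ y → u x ≠ u y) ∧
  (∀ x ∈ Set.Icc 1 k, ∀ y ∈ Set.Icc 1 k, x ≠ y → v x ≠ v y) ∧
  (∀ x ∈ Set.Icc 1 k, ∀ y ∈ Set.Icc 1 k, u x ≠ v y) ∧
  (∀ x ∈ Set.Icc 1 k, ∃ i, Mrel τ i (u x) (v x)) ∧
  (∀ x ∈ Set.Icc 1 k, ∃ j, OmegaE Ω τ j (v x) (u (cyc k x))) ∧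
  (∀ x ∈ Set.Icc 1 k, ∀ y ∈ Set.Icc 1 k, x ≠ y → ∀ i,
     Mrel τ i (u x) (v x) → ¬ Mrel τ i (u y) (v y)) ∧
  (∀ x ∈ Set.Icc 1 k, ∀ y ∈ Set.Icc 1 k, x ≠ y → ∀ j,
     OmegaE Ω τ j (v x) (u (cyc k x)) → ¬ OmegaE Ω τ j (v y) (u (cyc k y)))

/-- A canonical k-nice cycle: a k-nice cycle whose processor edges are in M(τ,x) and
whose location edges are in Ω^e(τ,x⊕1), for x = 1,…,k. -/
def CanonicalNiceCycle (Ω : MTrace → ℕ → ℕ → ℕ → Prop) (τ : MTrace) (k : ℕ)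
    (u v : ℕ → ℕ) : Prop :=
  NiceCycle Ω τ k u v ∧
  (∀ x ∈ Set.Icc 1 k, Mrel τ x (u x) (v x)) ∧
  (∀ x ∈ Set.Icc 1 k, OmegaE Ω τ (cyc k x) (v x) (u (cyc k x)))

/-- The trace satisfies the automaton Constrain_k(j). -/
def ConstrainK (k j : ℕ) (τ : MTrace) : Prop :=
  (j ≤ k →
    (∀ x ∈ Lw τ j, (ev τ x).data ≤ 2) ∧
    (∀ x ∈ Lw τ j, ∀ y ∈ Lw τ j, (ev τ x).data = 1 → (ev τ y).data = 1 → x = y) ∧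
    (∀ x ∈ Lw τ j, ∀ y ∈ Lw τ j, (ev τ x).data = 0 → (ev τ y).data ≠ 0 → x < y) ∧
    (∀ y ∈ Lw τ j, (ev τ y).data = 2 → ∃ x ∈ Lw τ j, (ev τ x).data = 1 ∧ x < y)) ∧
  (k < j → ∀ x ∈ Lw τ j, (ev τ x).data = 0)

/-- The trace satisfies the automaton Check_k(i). -/
def CheckK (k i : ℕ) (τ : MTrace) : Prop :=
  ∃ x ∈ Dom τ, ∃ y ∈ Dom τ, x < y ∧
    (ev τ x).proc = i ∧ (ev τ x).loc = i ∧
    ((ev τ x).data = 1 ∨ (ev τ x).data = 2) ∧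
    (ev τ y).proc = i ∧ (ev τ y).loc = cyc k i ∧
    ((ev τ y).data = 0 ∨ ((ev τ y).op = MemOp.W ∧ (ev τ y).data = 1))

lemma unamb_unique {τ : MTrace} (hU : Unambiguous τ) {j x y : ℕ}
    (hx : x ∈ Lw τ j) (hy : y ∈ Lw τ j) (h : (ev τ x).data = (ev τ y).data) : x = y := by
  by_contra hne
  exact (hU j x hx).2 y hy (fun e => hne e.symm) h.symm

/-- For a witness Ω and an unambiguous causal trace τ, the relation
Ω^e(τ,i) satisfies: ⟨r,s⟩ ∈ Ω^e(τ,i) implies ⟨r,t⟩ ∈ Ω^e(τ,i) or ⟨t,s⟩ ∈ Ω^e(τ,i). -/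
theorem omegaE_almost_total
    (m : ℕ) (Ω : MTrace → ℕ → ℕ → ℕ → Prop) (hΩ : IsWitness Ω)
    (τ : MTrace) (hU : Unambiguous τ) (hC : Causal τ)
    (i : ℕ) (hi1 : 1 ≤ i) (him : i ≤ m)
    (r s t : ℕ) (hr : r ∈ Lset τ i) (hs : s ∈ Lset τ i) (ht : t ∈ Lset τ i)
    (hrs : OmegaE Ω τ i r s) :
    OmegaE Ω τ i r t ∨ OmegaE Ω τ i t s := by
  obtain ⟨hrL, hsL, hcase⟩ := hrs
  have hs0 : (ev τ s).data ≠ 0 := by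
    rcases hcase with ⟨hd, hw, _⟩ | ⟨_, h⟩ | ⟨a, b, ha, hb, hab, hda, hdb⟩
    · rw [← hd]; exact (hU i r ⟨hr, hw⟩).1
    · exact h
    · rw [← hdb]; exact (hU i b hb).1
  by_cases ht0 : (ev τ t).data = 0
  · exact Or.inr ⟨ht, hs, Or.inr (Or.inl ⟨ht0, hs0⟩)⟩
  by_cases hr0 : (ev τ r).data = 0
  · exact Or.inl ⟨hr, ht, Or.inr (Or.inl ⟨hr0, ht0⟩)⟩
  -- obtain a write c with the same data as t
  obtain ⟨c, hc, hcd⟩ : ∃ c ∈ Lw τ i, (ev τ c).data = (ev τ t).data := by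
    rcases h : (ev τ t).op with _ | _
    · rcases hC i t ⟨ht, h⟩ with h0 | ⟨y, hy, hyd⟩
      · exact absurd h0 ht0
      · exact ⟨y, hy, hyd⟩
    · exact ⟨t, ⟨ht, h⟩, rfl⟩
  -- obtain writes wr, ws with the data of r and s
  obtain ⟨wr, hwr, hwrd, ws, hws, hwsd, hrws⟩ :
      ∃ wr ∈ Lw τ i, (ev τ wr).data = (ev τ r).data ∧
      ∃ ws ∈ Lw τ i, (ev τ ws).data = (ev τ s).data ∧
      ((wr = ws ∧ (ev τ r).op = MemOp.W ∧ (ev τ s).op = MemOp.R) ∨ Ω τ i wr ws) := by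
    rcases hcase with ⟨hd, hwop, hrop⟩ | ⟨h0, _⟩ | ⟨a, b, ha, hb, hab, hda, hdb⟩
    · exact ⟨r, ⟨hr, hwop⟩, rfl, r, ⟨hr, hwop⟩, hd, Or.inl ⟨rfl, hwop, hrop⟩⟩
    · exact absurd h0 hr0
    · exact ⟨a, ha, hda, b, hb, hdb, Or.inr hab⟩
  by_cases hteqr : (ev τ t).data = (ev τ r).data
  · rcases hrws with ⟨heq, hwop, hrop⟩ | hab
    · -- wr = ws, r is a write with data r = data s
      have hds : (ev τ r).data = (ev τ s).data := by
        rw [← hwrd, heq, hwsd]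
      rcases hop : (ev τ t).op with _ | _
      · exact Or.inl ⟨hr, ht, Or.inl ⟨hteqr.symm, hwop, hop⟩⟩
      · have : t = r := unamb_unique hU ⟨ht, hop⟩ ⟨hr, hwop⟩ hteqr
        subst this
        exact Or.inr ⟨ht, hs, Or.inl ⟨hds, hwop, hrop⟩⟩
    · exact Or.inr ⟨ht, hs, Or.inr (Or.inr
        ⟨wr, ws, hwr, hws, hab, hwrd.trans hteqr.symm, hwsd⟩)⟩
  by_cases hteqs : (ev τ t).data = (ev τ s).data
  · rcases hrws with ⟨heq, _, _⟩ | hab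
    · exact absurd (by rw [hteqs, ← hwsd, ← heq, hwrd]) hteqr
    · exact Or.inl ⟨hr, ht, Or.inr (Or.inr
        ⟨wr, ws, hwr, hws, hab, hwrd, hwsd.trans hteqs.symm⟩)⟩
  -- data t differs from both data r and data s
  obtain ⟨-, hirr, htrans, htot⟩ := hΩ τ i
  have hcws : c ≠ ws := fun e => hteqs (by rw [← hcd, e, hwsd])
  rcases htot c ws hc hws hcws with h1 | h1
  · exact Or.inr ⟨ht, hs, Or.inr (Or.inr ⟨c, ws, hc, hws, h1, hcd, hwsd⟩)⟩
  · have hcwr : wr ≠ c := fun e => hteqr (by rw [← hcd, ← e, hwrd])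
    rcases htot wr c hwr hc hcwr with h2 | h2
    · exact Or.inl ⟨hr, ht, Or.inr (Or.inr ⟨wr, c, hwr, hc, h2, hwrd, hcd⟩)⟩
    · exfalso
      rcases hrws with ⟨heq, _, _⟩ | hab
      · exact hirr ws (htrans ws c ws h1 (heq ▸ h2))
      · exact hirr wr (htrans wr c wr (htrans wr ws c hab h1) h2)
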